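/- Fix an integer s ≥ 1 and a function c : ℝ → ℝ. Let α : ℤ × ℝ → ℝ be positive and differentiable in t, satisfying the linear equation ∂_t α(n) = (−1)^{s+1} α(n − s) − c(t) α(n) for all n ∈ ℤ. Then v(n) = α(n)/α(n+1) satisfies the s-th differential-difference Burgers flow ∂_t ln v(n) = (−1)^s [ ∏_{j=1}^{s} v(n + 1 − j) − ∏_{j=1}^{s} v(n − j) ] for all n ∈ ℤ. -/

import Mathlib

/-!
Since `v(n) = α(n)/α(n+1)`, the product `∏_{j=1}^{s} v(m - j)` telescopes to `α(m - s)/α(m)`, while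
`∂_t ln v(n) = ∂_t ln α(n) - ∂_t ln α(n+1)`. The linear equation gives
`∂_t ln α(m) = (-1)^{s+1} α(m - s)/α(m) - c(t)`, so `c` cancels and the two telescoped products are
exactly what remains.
-/

theorem Finset.prod_Icc_div_sub_telescope {G₀ : Type*} [CommGroupWithZero G₀] (f : ℤ → G₀)
    (hf : ∀ n, f n ≠ 0) (m : ℤ) (s : ℕ) :
    ∏ j ∈ Finset.Icc 1 s, f (m - j) / f (m - j + 1) = f (m - s) / f m := by
  induction s with
  | zero => simp [hf m]
  | succ k ih =>
    have hshift : m - (k + 1 : ℕ) + 1 = m - k := by push_cast; ring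
    rw [Finset.prod_Icc_succ_top (Nat.le_add_left 1 k), ih, hshift, div_mul_div_cancel₀' (hf _)]

theorem HasDerivAt.log_div {f g : ℝ → ℝ} {f' g' t : ℝ} (hf : HasDerivAt f f' t)
    (hg : HasDerivAt g g' t) (hft : f t ≠ 0) (hgt : g t ≠ 0) :
    HasDerivAt (fun y => Real.log (f y / g y)) (f' / f t - g' / g t) t := by
  refine ((hf.div hg hgt).log (div_ne_zero hft hgt)).congr_deriv ?_
  simp only [Pi.div_apply]
  field_simp

theorem cole_hopf_burgers_one_general
    (s : ℕ) (c : ℝ → ℝ) (α : ℤ → ℝ → ℝ)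
    (hα : ∀ n t, 0 < α n t)
    (hlin : ∀ n t, HasDerivAt (α n)
      ((-1 : ℝ) ^ (s + 1) * α (n - (s : ℤ)) t - c t * α n t) t) :
    let v : ℤ → ℝ → ℝ := fun n t => α n t / α (n + 1) t
    ∀ n t, HasDerivAt (fun y => Real.log (v n y))
      ((-1 : ℝ) ^ s * (∏ j ∈ Finset.Icc 1 s, v (n + 1 - (j : ℤ)) t
        - ∏ j ∈ Finset.Icc 1 s, v (n - (j : ℤ)) t)) t := by
  intro v n t
  have hα₀ (m : ℤ) : α m t ≠ 0 := (hα m t).ne'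
  simp only [v, Finset.prod_Icc_div_sub_telescope (α · t) hα₀]
  convert (hlin n t).log_div (hlin (n + 1) t) (hα₀ n) (hα₀ (n + 1)) using 1
  field_simp [hα₀ n, hα₀ (n + 1)]
  ring

/-- The discrete Cole-Hopf transformation `v(n) = α(n)/α(n+1)` linearizes the
first differential-difference Burgers hierarchy. -/
theorem cole_hopf_burgers_one
    (s : ℕ) (hs : 1 ≤ s) (c : ℝ → ℝ) (α : ℤ → ℝ → ℝ)
    (hα : ∀ n t, 0 < α n t)
    (hlin : ∀ n t, HasDerivAt (α n)
      ((-1 : ℝ) ^ (s + 1) * α (n - (s : ℤ)) t - c t * α n t) t) :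
    let v : ℤ → ℝ → ℝ := fun n t => α n t / α (n + 1) t
    ∀ n t, HasDerivAt (fun y => Real.log (v n y))
      ((-1 : ℝ) ^ s * (∏ j ∈ Finset.Icc 1 s, v (n + 1 - (j : ℤ)) t
        - ∏ j ∈ Finset.Icc 1 s, v (n - (j : ℤ)) t)) t :=
  cole_hopf_burgers_one_general s c α hα hlin
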